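/- arXiv:2110.04029 — 4 statements merged into one kernel-verified Lean document; each statement's English description precedes it below -/
import Mathlib

section
/- With E and the determinants v_β as above (v_β = det(e_{β_i + j - i})_{1≤i,j≤m} with e_k the elementary symmetric polynomials in n variables, e_k = 0 for k ∉ {0,…,n}), for every β ∈ ℤ^m one has E(Δ^A_m · x^β) = v_β, where Δ^A_m = ∏_{1≤i<j≤m}(1 - x_i/x_j). -/
/- STATEMENT 2: E(Δ^A_m · x^β) = v_β, where v_β = det(e_{β_i + j - i}) is the
generalized Jacobi–Trudi determinant in elementary symmetric polynomials of
n variables and Δ^A_m = ∏_{1≤i<j≤m}(1 - x_i/x_j). -/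

set_option maxHeartbeats 1000000
open scoped Classical

abbrev Lau (m : ℕ) := AddMonoidAlgebra ℤ (Fin m → ℤ)

noncomputable def mono {m : ℕ} (β : Fin m → ℤ) : Lau m := AddMonoidAlgebra.single β 1

/-- `e_k` in `n` variables, with `e_0 = 1` and `e_k = 0` for `k < 0` or `k > n`. -/
noncomputable def eA (n : ℕ) (k : ℤ) : MvPolynomial (Fin n) ℤ :=
  if 0 ≤ k then MvPolynomial.esymm (Fin n) ℤ k.toNat else 0

/-- The ℤ-linear map `E` sending `x^β` to `e_{β₁} ⋯ e_{β_m}`. -/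
noncomputable def Emap (n m : ℕ) (f : Lau m) : MvPolynomial (Fin n) ℤ :=
  Finsupp.sum (show (Fin m → ℤ) →₀ ℤ from f.coeff) fun β c => c • ∏ i, eA n (β i)

/-- `v_β = det(e_{β_i + j - i})` (indices `i, j` running over `1,…,m`). -/
noncomputable def vA (n m : ℕ) (β : Fin m → ℤ) : MvPolynomial (Fin n) ℤ :=
  Matrix.det (Matrix.of fun i j : Fin m => eA n (β i + (j : ℤ) - i))

lemma mono_mul {m : ℕ} (a b : Fin m → ℤ) : mono a * mono b = mono (a + b) := by
  simp [mono, AddMonoidAlgebra.single_mul_single]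

lemma mono_zero {m : ℕ} : mono (0 : Fin m → ℤ) = 1 := rfl

lemma mono_pow {m : ℕ} (a : Fin m → ℤ) (k : ℕ) : mono a ^ k = mono (k • a) := by
  simp [mono, AddMonoidAlgebra.single_pow]

lemma mono_prod {m : ℕ} {α : Type*} (s : Finset α) (g : α → (Fin m → ℤ)) :
    ∏ x ∈ s, mono (g x) = mono (∑ x ∈ s, g x) := by
  induction s using Finset.induction with
  | empty => simp [mono_zero]
  | insert a s h ih => rw [Finset.prod_insert h, Finset.sum_insert h, ih, mono_mul]

lemma Emap_single (n m : ℕ) (β : Fin m → ℤ) (c : ℤ) :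
    Emap n m (AddMonoidAlgebra.single β c) = c • ∏ i, eA n (β i) :=
  by unfold Emap; rw [AddMonoidAlgebra.coeff_single]; exact Finsupp.sum_single_index (zero_smul _ _)

lemma Emap_add (n m : ℕ) (f g : Lau m) : Emap n m (f + g) = Emap n m f + Emap n m g :=
  by unfold Emap; rw [AddMonoidAlgebra.coeff_add]; exact Finsupp.sum_add_index' (fun _ => zero_smul _ _) (fun _ b c => add_smul b c _)

lemma Emap_sum {n m : ℕ} {α : Type*} (s : Finset α) (g : α → Lau m) :
    Emap n m (∑ x ∈ s, g x) = ∑ x ∈ s, Emap n m (g x) :=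
  map_sum (AddMonoidHom.mk' (Emap n m) (Emap_add n m)) g s

lemma coord_c {m : ℕ} (k : Fin m) :
    (∑ i : Fin m, ∑ j ∈ Finset.Ioi i, -Pi.single j (1:ℤ)) k = -(k : ℤ) := by
  simp only [Finset.sum_apply, Pi.neg_apply, Pi.single_apply]
  have h1 : ∀ i : Fin m, (∑ j ∈ Finset.Ioi i, -(if k = j then (1:ℤ) else 0))
      = if i < k then -1 else 0 := by
    intro i
    rw [Finset.sum_neg_distrib, Finset.sum_ite_eq (Finset.Ioi i) k (fun _ => (1:ℤ))]
    simp only [Finset.mem_Ioi]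
    split_ifs <;> simp
  rw [Finset.sum_congr rfl fun i _ => h1 i]
  have h2 : (Finset.univ.filter (fun i : Fin m => i < k)) = Finset.Iio k := by
    ext x; simp
  rw [← Finset.sum_filter, h2, Finset.sum_const, Fin.card_Iio]
  simp

lemma coord_w {m : ℕ} (σ : Equiv.Perm (Fin m)) (k : Fin m) :
    ((∑ i : Fin m, (i : ℕ) • Pi.single (σ i) (1:ℤ) : Fin m → ℤ)) k
      = ((σ⁻¹ k : Fin m) : ℤ) := by
  have h : (∑ i : Fin m, (i : ℕ) • Pi.single (σ i) (1:ℤ) : Fin m → ℤ)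
      = ∑ j : Fin m, ((σ⁻¹ j : Fin m) : ℕ) • Pi.single j (1:ℤ) :=
    Fintype.sum_equiv σ _ _ (fun i => by simp)
  rw [h, Finset.sum_apply]
  simp only [Pi.smul_apply, Pi.single_apply, smul_eq_mul, nsmul_eq_mul, mul_ite, mul_one,
    mul_zero]
  rw [Finset.sum_ite_eq Finset.univ k (fun j => (((σ⁻¹ j : Fin m) : ℕ) : ℤ))]
  simp

theorem stmt2 (n m : ℕ) (hn : 1 ≤ n) (hm : 1 ≤ m) (β : Fin m → ℤ) :
    Emap n m
      ((∏ i : Fin m, ∏ j ∈ Finset.Ioi i,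
          (1 - mono (Pi.single i (1 : ℤ) - Pi.single j 1))) * mono β) = vA n m β := by
  classical
  have factor : ∀ i j : Fin m,
      1 - mono (Pi.single i (1:ℤ) - Pi.single j 1)
        = mono (-Pi.single j 1) * (mono (Pi.single j 1) - mono (Pi.single i 1)) := by
    intro i j
    rw [mul_sub, mono_mul, mono_mul]
    congr 1
    · rw [← mono_zero]; congr 1; abel
    · congr 1; abel
  have hprod :
      (∏ i : Fin m, ∏ j ∈ Finset.Ioi i,
          (1 - mono (Pi.single i (1 : ℤ) - Pi.single j 1)))
      = mono (∑ i : Fin m, ∑ j ∈ Finset.Ioi i, -Pi.single j (1:ℤ))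
        * Matrix.det (Matrix.vandermonde fun i : Fin m => mono (Pi.single i (1:ℤ))) := by
    rw [Matrix.det_vandermonde]
    simp only [factor, Finset.prod_mul_distrib, mono_prod]
  rw [hprod, Matrix.det_apply, Finset.mul_sum, Finset.sum_mul, Emap_sum]
  have hterm : ∀ σ : Equiv.Perm (Fin m),
      Emap n m (mono (∑ i : Fin m, ∑ j ∈ Finset.Ioi i, -Pi.single j (1:ℤ))
          * (Equiv.Perm.sign σ • ∏ i : Fin m,
              Matrix.vandermonde (fun i : Fin m => mono (Pi.single i (1:ℤ))) (σ i) i)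
          * mono β)
        = (Equiv.Perm.sign σ : ℤ)
            • ∏ k : Fin m, eA n (β k + ((σ⁻¹ k : Fin m) : ℤ) - k) := by
    intro σ
    have h1 : (∏ i : Fin m,
        Matrix.vandermonde (fun i : Fin m => mono (Pi.single i (1:ℤ))) (σ i) i)
        = mono (∑ i : Fin m, (i : ℕ) • Pi.single (σ i) (1:ℤ)) := by
      rw [← mono_prod]
      exact Finset.prod_congr rfl fun i _ => by rw [Matrix.vandermonde_apply, mono_pow]
    rw [h1, Units.smul_def, mul_smul_comm, smul_mul_assoc, mono_mul, mono_mul]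
    have h2 : ((∑ i : Fin m, ∑ j ∈ Finset.Ioi i, -Pi.single j (1:ℤ))
          + (∑ i : Fin m, (i : ℕ) • Pi.single (σ i) (1:ℤ)) + β)
        = fun k => β k + ((σ⁻¹ k : Fin m) : ℤ) - k := by
      funext k
      have := coord_c k
      have := coord_w σ k
      simp only [Pi.add_apply]
      rw [coord_c k, coord_w σ k]
      ring
    rw [h2]
    have h3 : ((Equiv.Perm.sign σ : ℤ)
          • mono (fun k => β k + ((σ⁻¹ k : Fin m) : ℤ) - k) : Lau m)
        = AddMonoidAlgebra.single (fun k => β k + ((σ⁻¹ k : Fin m) : ℤ) - k)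
            (Equiv.Perm.sign σ : ℤ) := by
      simp [mono, AddMonoidAlgebra.smul_single']
    rw [h3, Emap_single]
  rw [Finset.sum_congr rfl fun σ _ => hterm σ]
  rw [vA, ← Matrix.det_transpose, Matrix.det_apply]
  refine Fintype.sum_equiv (Equiv.inv (Equiv.Perm (Fin m))) _ _ fun σ => ?_
  simp only [Equiv.inv_apply, Units.smul_def, Matrix.transpose_apply, Matrix.of_apply,
    Equiv.Perm.sign_inv]
end

section
/- Let v_β = det(e_{β_i + j - i})_{1≤i,j≤m} where e_k is the k-th elementary symmetric polynomial in n variables (e_0 = 1, e_k = 0 for k ∉ {0,…,n}). For every β ∈ ℤ^m, either v_β = 0, or there exist a partition γ = (γ₁ ≥ ⋯ ≥ γ_m) with 0 ≤ γ_m and γ₁ ≤ n, and a permutation w ∈ S_m, such that γ = w ∘ β (dot action s_i ∘ β = s_i(β+ρ)-ρ with ρ = (m-1,…,0) extended multiplicatively) and v_β = ε(w)·v_γ, where ε(w) is the sign of w. -/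
/- STATEMENT 4: For v_β = det(e_{β_i + j - i}): either v_β = 0, or there exist a
partition γ (antitone, with 0 ≤ γ_i ≤ n) and a permutation w ∈ S_m such that
γ = w ∘ β (dot action w ∘ β = w(β + ρ) - ρ, ρ = (m-1,…,0)) and v_β = ε(w)·v_γ. -/

open scoped Classical

/-- `ρ = (m-1, m-2, …, 0)`. -/
def rhoA (m : ℕ) (i : Fin m) : ℤ := (m : ℤ) - 1 - i

/-- The dot action `w ∘ β = w(β + ρ) - ρ` of the symmetric group on ℤ^m,
where permutations act on tuples by `(w·x)_i = x_{w⁻¹(i)}`. -/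
def dotA {m : ℕ} (w : Equiv.Perm (Fin m)) (β : Fin m → ℤ) : Fin m → ℤ :=
  fun i => β (w⁻¹ i) + rhoA m (w⁻¹ i) - rhoA m i

/-! ### Auxiliary lemmas -/

lemma eA_zero_of_gt (n : ℕ) (k : ℤ) (h : (n : ℤ) < k) : eA n k = 0 := by
  have h0 : (0:ℤ) ≤ k := le_of_lt (lt_of_le_of_lt (by positivity) h)
  rw [eA, if_pos h0, MvPolynomial.esymm]
  have : Finset.powersetCard k.toNat (Finset.univ : Finset (Fin n)) = ∅ := by
    rw [Finset.powersetCard_eq_empty]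
    simpa using (by omega : n < k.toNat)
  rw [this, Finset.sum_empty]

lemma eA_zero_of_neg (n : ℕ) (k : ℤ) (h : k < 0) : eA n k = 0 := by
  rw [eA, if_neg (by omega)]

/-- `v` in terms of `α = β + ρ`. -/
noncomputable def vB (n m : ℕ) (α : Fin m → ℤ) : MvPolynomial (Fin n) ℤ :=
  Matrix.det (Matrix.of fun i j : Fin m => eA n (α i + (j : ℤ) - ((m:ℤ) - 1)))

lemma vA_eq_vB (n m : ℕ) (β : Fin m → ℤ) : vA n m β = vB n m (fun i => β i + rhoA m i) := by
  unfold vA vB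
  congr 1
  ext i j
  simp only [Matrix.of_apply, rhoA]
  congr 1
  ring

lemma vB_perm (n m : ℕ) (α : Fin m → ℤ) (σ : Equiv.Perm (Fin m)) :
    vB n m (fun i => α (σ i)) = (Equiv.Perm.sign σ : ℤ) * vB n m α := by
  unfold vB
  have := Matrix.det_permute σ (Matrix.of fun i j : Fin m => eA n (α i + (j : ℤ) - ((m:ℤ) - 1)))
  simpa [Matrix.submatrix] using this

lemma strictMono_gap {m : ℕ} (g : Fin m → ℤ) (hg : StrictMono g) :
    ∀ i j : Fin m, i ≤ j → (j : ℤ) - (i : ℤ) ≤ g j - g i := by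
  intro i j hij
  have key : ∀ d : ℕ, ∀ i j : Fin m, (j : ℕ) = (i : ℕ) + d → (d : ℤ) ≤ g j - g i := by
    intro d
    induction d with
    | zero => intro i j h; have : i = j := Fin.ext (by omega); simp [this]
    | succ d ih =>
      intro i j h
      have hk : (i : ℕ) + d < m := by omega
      have h1 : (d : ℤ) ≤ g ⟨(i:ℕ)+d, hk⟩ - g i := ih i _ rfl
      have h2 : g ⟨(i:ℕ)+d, hk⟩ < g j := hg (by simp [Fin.lt_def]; omega)
      push_cast
      omega
  have hij' : (i:ℕ) ≤ (j:ℕ) := hij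
  have h := key ((j : ℕ) - (i : ℕ)) i j (by omega)
  omega

set_option maxHeartbeats 800000 in
lemma stmt4_main (n m : ℕ) (hn : 1 ≤ n) (hm : 1 ≤ m) (β : Fin m → ℤ)
    (α : Fin m → ℤ) (hα : α = fun i => β i + rhoA m i)
    (hinj : Function.Injective α)
    (hlb : ∀ i, 0 ≤ α i) (hub : ∀ i, α i ≤ (n : ℤ) + (m : ℤ) - 1) :
      ∃ (γ : Fin m → ℤ) (w : Equiv.Perm (Fin m)),
        Antitone γ ∧ (∀ i, 0 ≤ γ i ∧ γ i ≤ n) ∧ γ = dotA w β ∧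
        vA n m β = (Equiv.Perm.sign w : ℤ) • vA n m γ := by
  obtain ⟨σ, hsm⟩ : ∃ σ : Equiv.Perm (Fin m), StrictMono (fun i => -α (σ i)) := by
    refine ⟨Tuple.sort (fun i => -α i), ?_⟩
    have hmono : Monotone ((fun i => -α i) ∘ Tuple.sort (fun i => -α i)) :=
      Tuple.monotone_sort _
    have hinj' : Function.Injective ((fun i => -α i) ∘ Tuple.sort (fun i => -α i)) := by
      intro a b h
      exact (Tuple.sort (fun i => -α i)).injective (hinj (by simpa using neg_injective h))
    exact hmono.strictMono_of_injective hinj'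
  have hγval : ∀ i, dotA σ⁻¹ β i = α (σ i) - rhoA m i := by
    intro i
    simp only [dotA, inv_inv, hα]
  have hgap : ∀ i j : Fin m, i ≤ j → (j:ℤ) - i ≤ α (σ i) - α (σ j) := by
    intro i j hij
    have := strictMono_gap _ hsm i j hij
    omega
  have hanti : Antitone (dotA σ⁻¹ β) := by
    intro i j hij
    have h1 := hgap i j hij
    have hij' : (i:ℤ) ≤ (j:ℤ) := by exact_mod_cast hij
    rw [hγval i, hγval j, rhoA, rhoA]
    omega
  refine ⟨dotA σ⁻¹ β, σ⁻¹, hanti, ?_, rfl, ?_⟩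
  · intro i
    have hlt : m - 1 < m := by omega
    have hlt0 : 0 < m := by omega
    have g1 := hgap i ⟨m-1, hlt⟩ (by simp [Fin.le_def]; omega)
    have g2 := hgap ⟨0, hlt0⟩ i (by simp [Fin.le_def])
    have hb1 := hlb (σ ⟨m-1, hlt⟩)
    have hb2 := hub (σ ⟨0, hlt0⟩)
    have hc1 : ((⟨m-1, hlt⟩ : Fin m) : ℕ) = m - 1 := rfl
    have hc2 : ((⟨0, hlt0⟩ : Fin m) : ℕ) = 0 := rfl
    rw [hc1] at g1
    rw [hc2] at g2
    have hi1 : (i : ℕ) < m := i.isLt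
    rw [hγval i, rhoA]
    constructor
    · omega
    · omega
  · have h1 : vA n m (dotA σ⁻¹ β) = vB n m (fun i => α (σ i)) := by
      rw [vA_eq_vB]
      congr 1
      funext i
      rw [hγval i]
      ring
    have h2 : vB n m (fun i => α (σ i)) = (Equiv.Perm.sign σ : ℤ) * vB n m α :=
      vB_perm n m α σ
    have h3 : vA n m β = vB n m α := by rw [vA_eq_vB, ← hα]
    have hsgn : (Equiv.Perm.sign σ⁻¹ : ℤ) = (Equiv.Perm.sign σ : ℤ) := by simp
    have hu : ((Equiv.Perm.sign σ : ℤ) : MvPolynomial (Fin n) ℤ) *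
        ((Equiv.Perm.sign σ : ℤ) : MvPolynomial (Fin n) ℤ) = 1 := by
      rw [← Int.cast_mul, ← Units.val_mul, Int.units_mul_self, Units.val_one, Int.cast_one]
    rw [hsgn, h1, h2, zsmul_eq_mul, ← mul_assoc, hu, one_mul, h3]

theorem stmt4 (n m : ℕ) (hn : 1 ≤ n) (hm : 1 ≤ m) (β : Fin m → ℤ) :
    vA n m β = 0 ∨
      ∃ (γ : Fin m → ℤ) (w : Equiv.Perm (Fin m)),
        Antitone γ ∧ (∀ i, 0 ≤ γ i ∧ γ i ≤ n) ∧ γ = dotA w β ∧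
        vA n m β = (Equiv.Perm.sign w : ℤ) • vA n m γ := by
  by_cases hinj : Function.Injective (fun i => β i + rhoA m i)
  · by_cases hlb : ∀ i, 0 ≤ β i + rhoA m i
    · by_cases hub : ∀ i, β i + rhoA m i ≤ (n : ℤ) + (m : ℤ) - 1
      · exact Or.inr (stmt4_main n m hn hm β _ rfl hinj hlb hub)
      · left
        push_neg at hub
        obtain ⟨i, hi⟩ := hub
        have hzero : ∀ j : Fin m, eA n (β i + rhoA m i + (j:ℤ) - ((m:ℤ)-1)) = 0 := by
          intro j
          apply eA_zero_of_gt
          simp only [rhoA] at hi ⊢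
          have hj : (j:ℤ) < m := by exact_mod_cast j.isLt
          have hj0 : (0:ℤ) ≤ (j:ℤ) := by positivity
          omega
        rw [vA_eq_vB]
        unfold vB
        exact Matrix.det_eq_zero_of_row_eq_zero i fun j => hzero j
    · left
      push_neg at hlb
      obtain ⟨i, hi⟩ := hlb
      have hzero : ∀ j : Fin m, eA n (β i + rhoA m i + (j:ℤ) - ((m:ℤ)-1)) = 0 := by
        intro j
        apply eA_zero_of_neg
        simp only [rhoA] at hi ⊢
        have hj : (j:ℤ) < m := by exact_mod_cast j.isLt
        have hj0 : (0:ℤ) ≤ (j:ℤ) := by positivity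
        omega
      rw [vA_eq_vB]
      unfold vB
      exact Matrix.det_eq_zero_of_row_eq_zero i fun j => hzero j
  · left
    rw [Function.not_injective_iff] at hinj
    obtain ⟨i, j, hij, hne⟩ := hinj
    rw [vA_eq_vB]
    unfold vB
    apply Matrix.det_zero_of_row_eq hne
    funext k
    simp only [Matrix.of_apply, hij]
end

section
/- A column c (a finite subset of the signed alphabet {n̄ < ⋯ < 1̄ < 1 < ⋯ < n}) is n-admissible — meaning N_i(c) := |{x ∈ c : x ≤ ī or x ≥ i}| ≤ n - i + 1 for all i = 1,…,n — if and only if its dual c* = c*₁ ⊗ ⋯ ⊗ c*_n satisfies: for every i = 1,…,n, the number of entries equal to 1 in c*_i,…,c*_n is at least the number of entries equal to 1̄ in c*_i,…,c*_n. Here c* is defined by c*_i = ({1} if ī ∉ c) ∪ ({1̄} if i ∈ c), for each i = 1,…,n. -/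
/- STATEMENT 14: a column c on the alphabet {n̄<⋯<1̄<1<⋯<n} (barred letter ī
encoded as Sum.inl i, unbarred i as Sum.inr i, 0-indexed) is n-admissible
(N_i(c) ≤ n - i + 1 for all 1 ≤ i ≤ n) iff its dual c* satisfies: for every i,
the number of indices i' ≥ i with 1 ∈ c*_{i'} (i.e. ī' ∉ c) is at least the
number of indices i' ≥ i with 1̄ ∈ c*_{i'} (i.e. i' ∈ c). -/

open scoped Classical

/-- `N_i(c) = #{x ∈ c : x ≤ ī or x ≥ i}`: with 0-indexing, the number of elements
(barred or unbarred) whose index is ≥ i. -/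
noncomputable def Ncount {n : ℕ} (c : Finset (Fin n ⊕ Fin n)) (i : Fin n) : ℕ :=
  (c.filter fun x => Sum.elim (fun j => i ≤ j) (fun j => i ≤ j) x).card

theorem stmt14 (n : ℕ) (hn : 1 ≤ n) (c : Finset (Fin n ⊕ Fin n)) :
    (∀ i : Fin n, Ncount c i ≤ n - (i : ℕ)) ↔
      (∀ i : Fin n,
        (Finset.univ.filter fun i' : Fin n => i ≤ i' ∧ Sum.inr i' ∈ c).card ≤
          (Finset.univ.filter fun i' : Fin n => i ≤ i' ∧ Sum.inl i' ∉ c).card) := by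
  have key : ∀ i : Fin n,
      (Ncount c i ≤ n - (i : ℕ)) ↔
        ((Finset.univ.filter fun i' : Fin n => i ≤ i' ∧ Sum.inr i' ∈ c).card ≤
          (Finset.univ.filter fun i' : Fin n => i ≤ i' ∧ Sum.inl i' ∉ c).card) := by
    intro i
    set A := (Finset.univ.filter fun i' : Fin n => i ≤ i' ∧ Sum.inl i' ∈ c).card with hA
    set B := (Finset.univ.filter fun i' : Fin n => i ≤ i' ∧ Sum.inr i' ∈ c).card with hB
    set C := (Finset.univ.filter fun i' : Fin n => i ≤ i' ∧ Sum.inl i' ∉ c).card with hC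
    have hsplit : Ncount c i = A + B := by
      have h1 : c.filter (fun x => Sum.elim (fun j => i ≤ j) (fun j => i ≤ j) x)
          = ((Finset.univ.filter fun j : Fin n => i ≤ j ∧ Sum.inl j ∈ c).image Sum.inl)
            ∪ ((Finset.univ.filter fun j : Fin n => i ≤ j ∧ Sum.inr j ∈ c).image Sum.inr) := by
        ext x
        rcases x with j | j <;> simp [and_comm]
      have hdisj : Disjoint
          ((Finset.univ.filter fun j : Fin n => i ≤ j ∧ Sum.inl j ∈ c).image Sum.inl)
          ((Finset.univ.filter fun j : Fin n => i ≤ j ∧ Sum.inr j ∈ c).image Sum.inr) := by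
        simp [Finset.disjoint_left]
      rw [Ncount, h1, Finset.card_union_of_disjoint hdisj,
        Finset.card_image_of_injective _ Sum.inl_injective,
        Finset.card_image_of_injective _ Sum.inr_injective]
    have htot : A + C = n - (i : ℕ) := by
      have := Finset.card_filter_add_card_filter_not
        (s := Finset.univ.filter fun j : Fin n => i ≤ j)
        (p := fun j => Sum.inl j ∈ c)
      rw [Finset.filter_filter, Finset.filter_filter] at this
      have hIci : (Finset.univ.filter fun j : Fin n => i ≤ j) = Finset.Ici i := by
        ext j; simp
      rw [hIci, Fin.card_Ici] at this
      rw [hA, hC, ← this]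
    omega
  exact forall_congr' key
end

section
/- For b a highest weight vertex in the type C_n crystal of a tensor product of columns, write b* for its dual King tableau via the combinatorial Howe duality. Then the weight of b* equals μ̂ = (n - μ'_m, …, n - μ'₁) where μ'_j = |c_j| is the height of the j-th column of b, and the shape of b* is λ̂ where λ = wt(b); explicitly, for each i, the height |d_i| of the i-th column of b* equals m - λ_i. -/
/- STATEMENT 16: for b = c₁⊗⋯⊗c_m a highest weight vertex (each prefix of its
reading word has partition weight) in the type C_n crystal of a tensor product
of columns, the dual b* = d₁⊗⋯⊗d_n (d_i = {j : ī ∉ c_j} ∪ {j̄ : i ∈ c_j})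
satisfies: its weight is μ̂, i.e. for each j, (#entries j) − (#entries j̄) =
n − |c_j|; and its shape is λ̂, i.e. for each i, |d_i| = m − λ_i where
λ_i = (#entries ī in b) − (#entries i in b). -/

open scoped Classical

/-- The type C_n alphabet {n̄ < ⋯ < 1̄ < 1 < ⋯ < n}: barred letters (reversed
order) on the left of the lexicographic sum. -/
abbrev CAlpha (n : ℕ) := Lex ((Fin n)ᵒᵈ ⊕ Fin n)

/-- The barred letter ī (0-indexed). -/
def barL {n : ℕ} (i : Fin n) : CAlpha n := toLex (Sum.inl (OrderDual.toDual i))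

/-- The unbarred letter i (0-indexed). -/
def unbL {n : ℕ} (i : Fin n) : CAlpha n := toLex (Sum.inr i)

/-- Reading word of a tensor product of columns: columns left to right, each read
from top to bottom (i.e. in increasing order). -/
noncomputable def wordOf {n m : ℕ} (b : Fin m → Finset (CAlpha n)) : List (CAlpha n) :=
  (List.ofFn fun j : Fin m => ((b j).sort (· ≤ ·))).flatten

/-- The weight of a word: `wtP p i = (#ī in p) − (#i in p)`. -/
noncomputable def wtP {n : ℕ} (p : List (CAlpha n)) (i : Fin n) : ℤ :=
  (p.count (barL i) : ℤ) - p.count (unbL i)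

/-- b is a highest weight vertex iff the weight of every prefix of its reading
word is a partition. -/
noncomputable def isHW {n m : ℕ} (b : Fin m → Finset (CAlpha n)) : Prop :=
  ∀ k : ℕ, Antitone (fun i => wtP ((wordOf b).take k) i) ∧
    ∀ i : Fin n, 0 ≤ wtP ((wordOf b).take k) i

/-- The i-th column of the dual b*: `d_i = {j : ī ∉ c_j} ∪ {j̄ : i ∈ c_j}`, a subset
of the alphabet {1,1̄,…,m,m̄} with j encoded as (j,false) and j̄ as (j,true). -/
noncomputable def dcol {n m : ℕ} (b : Fin m → Finset (CAlpha n)) (i : Fin n) :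
    Finset (Fin m × Bool) :=
  Finset.univ.filter fun p =>
    (p.2 = false ∧ barL i ∉ b p.1) ∨ (p.2 = true ∧ unbL i ∈ b p.1)


lemma barL_inj {n : ℕ} : Function.Injective (barL (n := n)) := by
  intro i j h
  have := toLex.injective h
  exact OrderDual.toDual.injective (Sum.inl.inj this)

lemma unbL_inj {n : ℕ} : Function.Injective (unbL (n := n)) := by
  intro i j h
  exact Sum.inr.inj (toLex.injective h)

lemma calpha_split {n : ℕ} (s : Finset (CAlpha n)) :
    (Finset.univ.filter fun i => barL i ∈ s).card +
      (Finset.univ.filter fun i => unbL i ∈ s).card = s.card := by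
  classical
  have hs : ((Finset.univ.filter fun i => barL i ∈ s).map ⟨barL, barL_inj⟩) ∪
      ((Finset.univ.filter fun i => unbL i ∈ s).map ⟨unbL, unbL_inj⟩) = s := by
    ext x
    simp only [Finset.mem_union, Finset.mem_map, Finset.mem_filter, Finset.mem_univ,
      true_and, Function.Embedding.coeFn_mk]
    constructor
    · rintro (⟨a, ha, rfl⟩ | ⟨a, ha, rfl⟩) <;> exact ha
    · intro hx
      rcases x with i | i
      · exact Or.inl ⟨i, hx, rfl⟩
      · exact Or.inr ⟨i, hx, rfl⟩
  have hd : Disjoint ((Finset.univ.filter fun i => barL i ∈ s).map ⟨barL, barL_inj⟩)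
      ((Finset.univ.filter fun i => unbL i ∈ s).map ⟨unbL, unbL_inj⟩) := by
    rw [Finset.disjoint_left]
    rintro x hx hy
    simp only [Finset.mem_map, Finset.mem_filter, Function.Embedding.coeFn_mk] at hx hy
    obtain ⟨a, _, rfl⟩ := hx
    obtain ⟨c, _, hc⟩ := hy
    exact (Sum.inl_ne_inr (toLex.injective hc.symm)).elim
  calc (Finset.univ.filter fun i => barL i ∈ s).card +
      (Finset.univ.filter fun i => unbL i ∈ s).card
      = (((Finset.univ.filter fun i => barL i ∈ s).map ⟨barL, barL_inj⟩) ∪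
        ((Finset.univ.filter fun i => unbL i ∈ s).map ⟨unbL, unbL_inj⟩)).card := by
        rw [Finset.card_union_of_disjoint hd, Finset.card_map, Finset.card_map]
    _ = s.card := by rw [hs]

lemma dcol_card {n m : ℕ} (b : Fin m → Finset (CAlpha n)) (i : Fin n) :
    (dcol b i).card = (Finset.univ.filter fun j => barL i ∉ b j).card +
      (Finset.univ.filter fun j => unbL i ∈ b j).card := by
  classical
  have hs : dcol b i = ((Finset.univ.filter fun j => barL i ∉ b j).map
        ⟨fun j => (j, false), fun a b h => by simpa using h⟩) ∪
      ((Finset.univ.filter fun j => unbL i ∈ b j).map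
        ⟨fun j => (j, true), fun a b h => by simpa using h⟩) := by
    ext ⟨j, c⟩
    cases c
    · simp [dcol]
      exact ⟨fun h => Or.inl ⟨j, h, rfl⟩, fun h => by
        rcases h with ⟨a, h, he⟩ | ⟨a, h, he⟩
        · obtain ⟨rfl, -⟩ := Prod.mk.inj he; exact h
        · exact absurd (Prod.mk.inj he).2 (by decide)⟩
    · simp [dcol]
      exact ⟨fun h => Or.inr ⟨j, h, rfl⟩, fun h => by
        rcases h with ⟨a, h, he⟩ | ⟨a, h, he⟩
        · exact absurd (Prod.mk.inj he).2 (by decide)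
        · obtain ⟨rfl, -⟩ := Prod.mk.inj he; exact h⟩
  have hd : Disjoint ((Finset.univ.filter fun j => barL i ∉ b j).map
        ⟨fun j => (j, false), fun a b h => by simpa using h⟩)
      ((Finset.univ.filter fun j => unbL i ∈ b j).map
        ⟨fun j => (j, true), fun a b h => by simpa using h⟩) := by
    rw [Finset.disjoint_left]
    rintro ⟨j, c⟩ hx hy
    simp only [Finset.mem_map, Finset.mem_filter, Function.Embedding.coeFn_mk,
      Prod.mk.injEq] at hx hy
    obtain ⟨a, _, _, h1⟩ := hx
    obtain ⟨d, _, _, h2⟩ := hy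
  rw [hs, Finset.card_union_of_disjoint hd, Finset.card_map, Finset.card_map]

theorem stmt16 (n m : ℕ) (hn : 1 ≤ n) (hm : 1 ≤ m)
    (b : Fin m → Finset (CAlpha n)) (hb : isHW b) :
    -- the weight of b* is μ̂ = (n - μ'_m, …, n - μ'_1):
    (∀ j : Fin m,
      ((Finset.univ.filter fun i : Fin n => (j, false) ∈ dcol b i).card : ℤ) -
          (Finset.univ.filter fun i : Fin n => (j, true) ∈ dcol b i).card =
        (n : ℤ) - (b j).card) ∧
    -- the shape of b* is λ̂: |d_i| = m - λ_i where λ = wt(b):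
    (∀ i : Fin n,
      ((dcol b i).card : ℤ) =
        (m : ℤ) - (((Finset.univ.filter fun j : Fin m => barL i ∈ b j).card : ℤ) -
          (Finset.univ.filter fun j : Fin m => unbL i ∈ b j).card)) := by
  constructor
  · intro j
    have h1 : (Finset.univ.filter fun i : Fin n => (j, false) ∈ dcol b i) =
        (Finset.univ.filter fun i : Fin n => barL i ∉ b j) := by
      ext i; simp [dcol]
    have h2 : (Finset.univ.filter fun i : Fin n => (j, true) ∈ dcol b i) =
        (Finset.univ.filter fun i : Fin n => unbL i ∈ b j) := by
      ext i; simp [dcol]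
    have h3 := calpha_split (b j)
    have h4 : (Finset.univ.filter fun i : Fin n => barL i ∈ b j).card +
        (Finset.univ.filter fun i : Fin n => barL i ∉ b j).card = n := by
      have := Finset.card_filter_add_card_filter_not
        (s := (Finset.univ : Finset (Fin n))) (p := fun i => barL i ∈ b j)
      simpa using this
    rw [h1, h2]
    push_cast
    omega
  · intro i
    have h4 : (Finset.univ.filter fun j : Fin m => barL i ∈ b j).card +
        (Finset.univ.filter fun j : Fin m => barL i ∉ b j).card = m := by
      have := Finset.card_filter_add_card_filter_not
        (s := (Finset.univ : Finset (Fin m))) (p := fun j => barL i ∈ b j)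
      simpa using this
    rw [dcol_card]
    push_cast
    omega
end
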